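/- arXiv:0905.0769 — 6 statements merged into one kernel-verified Lean document; each statement's English description precedes it below -/
import Mathlib

section
/- Let I = λx.x and J = (Θ G), where Θ = (λx.λy.(y ((x x) y))) (λx.λy.(y ((x x) y))) is Turing's fixed point combinator and G = λx.λy.λz.(y (x z)). Then I and J are operationally equivalent: for every context C (a λ-term with a hole), C[I] is solvable if and only if C[J] is solvable. -/
/-- Untyped λ-terms in de Bruijn notation. -/
inductive Lam : Type
  | var : ℕ → Lam
  | lam : Lam → Lam
  | app : Lam → Lam → Lam

namespace Lam

/-- Lift (shift by one) the de Bruijn indices ≥ `d`. -/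
def lift : Lam → ℕ → Lam
  | var n, d => if n < d then var n else var (n + 1)
  | lam u, d => lam (lift u (d + 1))
  | app u v, d => app (lift u d) (lift v d)

/-- Capture-avoiding substitution `t[s/k]`. -/
def subst : Lam → ℕ → Lam → Lam
  | var n, k, s => if n = k then s else if k < n then var (n - 1) else var n
  | lam u, k, s => lam (subst u (k + 1) (lift s 0))
  | app u v, k, s => app (subst u k s) (subst v k s)

/-- Head reduction: `λx̄.((λx.U) V) V₁ ... Vₖ →t λx̄.(U[V/x]) V₁ ... Vₖ`. -/
inductive Head : Lam → Lam → Prop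
  | beta (u v : Lam) : Head (app (lam u) v) (subst u 0 v)
  | appL {u u' : Lam} (v : Lam) : Head u u' → (∀ w, u ≠ lam w) →
      Head (app u v) (app u' v)
  | abs {u u' : Lam} : Head u u' → Head (lam u) (lam u')

/-- Terms of the form `x V₁ ... Vₖ` for a variable `x`. -/
inductive VarApp : Lam → Prop
  | var (n : ℕ) : VarApp (var n)
  | app {u : Lam} (v : Lam) : VarApp u → VarApp (app u v)

/-- Head normal forms: `λx₁...λxₘ.(x V₁ ... Vₖ)`. -/
inductive Hnf : Lam → Prop
  | base {t : Lam} : VarApp t → Hnf t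
  | lam {t : Lam} : Hnf t → Hnf (lam t)

/-- A λ-term is solvable iff its head reduction reaches a head normal form. -/
def Solvable (t : Lam) : Prop :=
  ∃ t', Relation.ReflTransGen Head t t' ∧ Hnf t'

end Lam

/-- Contexts: λ-terms with a hole. -/
inductive Ctx : Type
  | hole : Ctx
  | lam : Ctx → Ctx
  | appL : Ctx → Lam → Ctx
  | appR : Lam → Ctx → Ctx

/-- Plugging a term into the hole of a context (possibly capturing variables:
in de Bruijn notation, the plugged term is not lifted under binders). -/
def Ctx.plug : Ctx → Lam → Lam
  | .hole, t => t
  | .lam c, t => .lam (c.plug t)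
  | .appL c v, t => .app (c.plug t) v
  | .appR u c, t => .app u (c.plug t)

/-- `I = λx.x`. -/
def Iterm : Lam := .lam (.var 0)

/-- `δ = λx.λy.(y ((x x) y))`. -/
def deltaTerm : Lam :=
  .lam (.lam (.app (.var 0) (.app (.app (.var 1) (.var 1)) (.var 0))))

/-- Turing's fixed point combinator `Θ = δ δ`. -/
def thetaTerm : Lam := .app deltaTerm deltaTerm

/-- `G = λx.λy.λz.(y (x z))`. -/
def Gterm : Lam := .lam (.lam (.lam (.app (.var 1) (.app (.var 2) (.var 0)))))

/-- `J = (Θ G)`. -/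
def Jterm : Lam := .app thetaTerm Gterm

/-!
`J` is an infinite η-expansion of `I`: it head-reduces in three steps to `λy.λz. y (J z)`, so `J t`
head-reduces to `λz. t (J z)`. Let `t ~ t'` (`Sim t t'`) when `t'` arises from `t` by replacing some
occurrences of `I` by `J`, wrapping subterms `u'` into `J u'`, and η-expanding `u'` into `λz. u' s`
where `z ~ s`; then `C[I] ~ C[J]`. This relation is a simulation for head reduction in both
directions, up to further head reduction on both sides, and it reflects head normal forms; if `t` is
a head normal form then `t'` is solvable, since the `J`s and η-expansions along its head spine are
consumed by the arguments there (or by a fresh variable). Since head reduction is deterministic, a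
solvable term is accessible for head reduction, and induction on accessibility transports
solvability across `~` either way.
-/

namespace Lam

theorem lift_lift (t : Lam) {d d' : ℕ} (h : d' ≤ d) :
    (t.lift d).lift d' = (t.lift d').lift (d + 1) := by
  induction t generalizing d d' with
  | var _ => grind [lift]
  | lam _ ih => simp only [lift, ih (Nat.succ_le_succ h)]
  | app _ _ ihu ihv => simp only [lift, ihu h, ihv h]

theorem subst_lift (t : Lam) (d : ℕ) (s : Lam) : (t.lift d).subst d s = t := by
  induction t generalizing d s with
  | var _ => grind [lift, subst]
  | lam _ ih => simp only [lift, subst, ih]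
  | app _ _ ihu ihv => simp only [lift, subst, ihu, ihv]

theorem lift_subst_of_le (t : Lam) {d k : ℕ} (s : Lam) (h : d ≤ k) :
    (t.subst k s).lift d = (t.lift d).subst (k + 1) (s.lift d) := by
  induction t generalizing d k s with
  | var _ => grind [lift, subst]
  | lam _ ih =>
    simp only [lift, subst, ih _ (Nat.succ_le_succ h), lift_lift s (Nat.zero_le d)]
  | app _ _ ihu ihv => simp only [lift, subst, ihu _ h, ihv _ h]

theorem lift_subst_of_ge (t : Lam) {d k : ℕ} (s : Lam) (h : k ≤ d) :
    (t.subst k s).lift d = (t.lift (d + 1)).subst k (s.lift d) := by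
  induction t generalizing d k s with
  | var _ => grind [lift, subst]
  | lam _ ih =>
    simp only [lift, subst, ih _ (Nat.succ_le_succ h), lift_lift s (Nat.zero_le d)]
  | app _ _ ihu ihv => simp only [lift, subst, ihu _ h, ihv _ h]

theorem subst_subst (t : Lam) {j k : ℕ} (v s : Lam) (h : j ≤ k) :
    (t.subst j v).subst k s = (t.subst (k + 1) (s.lift j)).subst j (v.subst k s) := by
  induction t generalizing j k v s with
  | var _ => grind [lift, subst, subst_lift]
  | lam u ih =>
    simp only [subst, ih _ _ (Nat.succ_le_succ h), lift_lift s (Nat.zero_le j),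
      lift_subst_of_le v s (Nat.zero_le k)]
  | app _ _ ihu ihv => simp only [subst, ihu _ _ h, ihv _ _ h]

theorem subst_lift_succ (t : Lam) (k : ℕ) : (t.lift (k + 1)).subst k (var k) = t := by
  induction t generalizing k with
  | var _ => grind [lift, subst]
  | lam _ ih => simpa [lift, subst] using ih (k + 1)
  | app _ _ ihu ihv => simp only [lift, subst, ihu, ihv]

open Relation

variable {t u v : Lam}

local infix:50 " ↠ " => ReflTransGen Head

theorem VarApp.not_head (ht : VarApp t) : ¬ Head t u := by
  induction ht generalizing u with
  | var n => rintro ⟨⟩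
  | app v hu ih =>
    rintro (_ | ⟨_, h, _⟩)
    · cases hu
    · exact ih h

theorem Hnf.not_head (ht : Hnf t) : ¬ Head t u := by
  induction ht generalizing u with
  | base hv => exact hv.not_head
  | lam _ ih => rintro ⟨⟩; exact ih ‹_›

theorem Head.det {u₁ u₂ : Lam} (h₁ : Head t u₁) (h₂ : Head t u₂) : u₁ = u₂ := by
  induction h₁ generalizing u₂ with
  | beta => cases h₂ with
    | beta => rfl
    | appL _ _ hn => exact absurd rfl (hn _)
  | appL _ _ hn ih => cases h₂ with
    | beta => exact absurd rfl (hn _)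
    | appL _ h₂ => rw [ih h₂]
  | abs _ ih => cases h₂ with
    | abs h₂ => rw [ih h₂]

theorem head_rightUnique : Relator.RightUnique Head := fun _ _ _ => Head.det

theorem hnf_or_exists_head (t : Lam) : Hnf t ∨ ∃ u, Head t u := by
  induction t with
  | var n => exact .inl (.base (.var n))
  | lam u ih => exact ih.imp .lam fun ⟨u', h⟩ => ⟨_, h.abs⟩
  | app f v ih _ =>
    match f, ih with
    | .lam b, _ => exact .inr ⟨_, .beta b v⟩
    | .var n, _ => exact .inl (.base ((VarApp.var n).app v))
    | .app _ _, .inl (.base hu) => exact .inl (.base (hu.app v))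
    | .app _ _, .inr ⟨_, h⟩ => exact .inr ⟨_, h.appL v fun _ => Lam.noConfusion⟩

theorem Hnf.eq_of_star (ht : Hnf t) (htu : t ↠ u) : u = t := by
  rcases htu.cases_head with rfl | ⟨_, h, _⟩
  · rfl
  · exact absurd h ht.not_head

theorem Head.lift (h : Head t u) (d : ℕ) : Head (t.lift d) (u.lift d) := by
  induction h generalizing d with
  | beta a b => rw [lift_subst_of_ge a b (Nat.zero_le d)]; exact .beta _ _
  | appL v h hn ih =>
    refine .appL _ (ih d) ?_
    cases h with
    | abs => exact absurd rfl (hn _)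
    | _ => exact fun _ => Lam.noConfusion
  | abs _ ih => exact .abs (ih (d + 1))

theorem Head.subst (h : Head t u) (k : ℕ) (s : Lam) : Head (t.subst k s) (u.subst k s) := by
  induction h generalizing k s with
  | beta a b => rw [subst_subst a b s (Nat.zero_le k)]; exact .beta _ _
  | appL v h hn ih =>
    refine .appL _ (ih k s) ?_
    cases h with
    | abs => exact absurd rfl (hn _)
    | _ => exact fun _ => Lam.noConfusion
  | abs _ ih => exact .abs (ih _ _)

theorem VarApp.lift (ht : VarApp t) (d : ℕ) : VarApp (t.lift d) := by
  induction ht with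
  | var n => simp only [Lam.lift]; split_ifs <;> exact .var _
  | app v _ ih => exact ih.app _

theorem VarApp.of_lift {d : ℕ} (ht : VarApp (t.lift d)) : VarApp t := by
  induction t with
  | var n => exact .var n
  | lam u => cases ht
  | app u v ih => cases ht with | app _ hu => exact (ih hu).app v

theorem Hnf.lift (ht : Hnf t) (d : ℕ) : Hnf (t.lift d) := by
  induction ht generalizing d with
  | base hv => exact .base (hv.lift d)
  | lam _ ih => exact (ih (d + 1)).lam

theorem eq_lam_of_lift_eq_lam {d : ℕ} {c : Lam} (h : t.lift d = lam c) :
    ∃ c₀, t = lam c₀ ∧ c = c₀.lift (d + 1) := by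
  cases t with
  | var n => simp only [Lam.lift] at h; split_ifs at h
  | lam u => exact ⟨u, rfl, by cases h; rfl⟩
  | app u v => cases h

theorem exists_head_of_head_lift {d : ℕ} (h : Head (t.lift d) v) :
    ∃ u, Head t u ∧ v = u.lift d := by
  rcases hnf_or_exists_head t with ht | ⟨u, hu⟩
  · exact absurd h ((ht.lift d).not_head)
  · exact ⟨u, hu, h.det (hu.lift d)⟩

theorem star_lam (h : t ↠ u) : lam t ↠ lam u := h.lift _ fun _ _ => .abs

theorem star_lift (h : t ↠ u) (d : ℕ) : t.lift d ↠ u.lift d := h.lift _ fun _ _ h => h.lift d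

theorem star_subst (h : t ↠ u) (k : ℕ) (s : Lam) : t.subst k s ↠ u.subst k s :=
  h.lift _ fun _ _ h => h.subst k s

theorem star_lam_inv (h : lam t ↠ v) : ∃ u, v = lam u ∧ t ↠ u := by
  induction h with
  | refl => exact ⟨t, rfl, .refl⟩
  | tail _ h ih =>
    obtain ⟨u, rfl, hu⟩ := ih
    cases h with | abs h => exact ⟨_, rfl, hu.tail h⟩

theorem star_app_cases (h : t ↠ u) (v : Lam) :
    (∃ p, u = lam p ∧ app t v ↠ p.subst 0 v) ∨ ((∀ w, u ≠ lam w) ∧ app t v ↠ app u v) := by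
  induction h using ReflTransGen.head_induction_on with
  | refl =>
    cases u with
    | lam p => exact .inl ⟨p, rfl, .single (.beta p v)⟩
    | _ => exact .inr ⟨fun _ => Lam.noConfusion, .refl⟩
  | head h hrest ih =>
    rename_i t _
    cases t with
    | var => cases h
    | lam m =>
      obtain ⟨p, rfl, hp⟩ := star_lam_inv (.head h hrest)
      exact .inl ⟨p, rfl, .head (.beta m v) (star_subst hp 0 v)⟩
    | app =>
      have hstep := h.appL v fun _ => Lam.noConfusion
      exact ih.imp (fun ⟨p, hp, hs⟩ => ⟨p, hp, .head hstep hs⟩)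
        fun ⟨hn, hs⟩ => ⟨hn, .head hstep hs⟩

theorem star_beta_of_star_lam {p : Lam} (h : t ↠ lam p) (v : Lam) : app t v ↠ p.subst 0 v := by
  rcases star_app_cases h v with ⟨_, ⟨⟩, hs⟩ | ⟨hn, _⟩
  · exact hs
  · exact absurd rfl (hn p)

theorem Solvable.of_star (h : t ↠ u) (hu : Solvable u) : Solvable t :=
  let ⟨w, huw, hw⟩ := hu
  ⟨w, h.trans huw, hw⟩

theorem Solvable.star (ht : Solvable t) (h : t ↠ u) : Solvable u := by
  obtain ⟨w, htw, hw⟩ := ht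
  rcases ReflTransGen.total_of_right_unique head_rightUnique htw h with hwu | huw
  · exact ⟨u, .refl, hw.eq_of_star hwu ▸ hw⟩
  · exact ⟨w, huw, hw⟩

theorem solvable_iff_of_star (h : t ↠ u) : Solvable t ↔ Solvable u :=
  ⟨fun ht => ht.star h, .of_star h⟩

theorem Solvable.lam (ht : Solvable t) : Solvable (lam t) :=
  let ⟨w, htw, hw⟩ := ht
  ⟨.lam w, star_lam htw, hw.lam⟩

theorem Solvable.acc (ht : Solvable t) : Acc (Function.swap Head) t := by
  obtain ⟨w, htw, hw⟩ := ht
  induction htw using ReflTransGen.head_induction_on with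
  | refl => exact ⟨_, fun _ h => absurd h hw.not_head⟩
  | head h _ ih => exact ⟨_, fun _ h' => h.det h' ▸ ih⟩

theorem Solvable.of_subst {k : ℕ} {s : Lam} (h : Solvable (t.subst k s)) : Solvable t := by
  suffices ∀ a, Acc (Function.swap Head) a → ∀ t, a = t.subst k s → Solvable t from
    this _ h.acc t rfl
  intro a ha
  induction ha with
  | intro a _ ih =>
    rintro t rfl
    rcases hnf_or_exists_head t with ht | ⟨u, hu⟩
    · exact ⟨t, .refl, ht⟩
    · exact (ih _ (hu.subst k s) u rfl).of_star (.single hu)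

theorem solvable_foldl_iff_of_star (h : t ↠ u) (args : List Lam) :
    Solvable (args.foldl app t) ↔ Solvable (args.foldl app u) := by
  induction args generalizing t u with
  | nil => exact solvable_iff_of_star h
  | cons v args ih =>
    rcases star_app_cases h v with ⟨p, rfl, hp⟩ | ⟨_, hs⟩
    · exact (ih hp).trans (ih (.single (.beta p v))).symm
    · exact ih hs

theorem VarApp.foldl (ht : VarApp t) (args : List Lam) : VarApp (args.foldl Lam.app t) := by
  induction args generalizing t with
  | nil => exact ht
  | cons v args ih => exact ih (ht.app v)

theorem solvable_foldl_eta {s : Lam} (ht : ∀ args : List Lam, Solvable (args.foldl app t)) :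
    ∀ args : List Lam, Solvable (args.foldl app (lam (app (t.lift 0) s)))
  | [] => by
    -- substituting `z` for itself in the body `t↑ s` yields `t s[z/z]`
    refine Solvable.lam (Solvable.of_subst (k := 0) (s := var 0) ?_)
    simpa [subst, subst_lift] using ht [s.subst 0 (var 0)]
  | v :: args => by
    rw [List.foldl_cons, solvable_foldl_iff_of_star (.single (.beta _ v))]
    simpa [subst, subst_lift] using ht (s.subst 0 v :: args)

@[simp] theorem lift_I (d : ℕ) : Iterm.lift d = Iterm := by simp [Iterm, Lam.lift]

@[simp] theorem subst_I (k : ℕ) (s : Lam) : Iterm.subst k s = Iterm := by simp [Iterm, subst]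

@[simp] theorem lift_J (d : ℕ) : Jterm.lift d = Jterm := by
  simp [Jterm, thetaTerm, deltaTerm, Gterm, Lam.lift]

@[simp] theorem subst_J (k : ℕ) (s : Lam) : Jterm.subst k s = Jterm := by
  simp [Jterm, thetaTerm, deltaTerm, Gterm, subst]

theorem hnf_I : Hnf Iterm := .lam (.base (.var 0))

theorem not_varApp_J : ¬ VarApp Jterm := by
  rintro (_ | ⟨_, _ | ⟨_, _ | _⟩⟩)

-- `J = Θ G →t (λy. y (Θ y)) G →t G J →t λy.λz. y (J z)`
theorem J_star : Jterm ↠ lam (lam (app (var 1) (app Jterm (var 0)))) :=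
  .head (.appL _ (.beta _ _) fun _ => Lam.noConfusion) <| .head (.beta _ _) <| .single (.beta _ _)

theorem app_J_star (t : Lam) : app Jterm t ↠ lam (app (t.lift 0) (app Jterm (var 0))) := by
  simpa [subst] using star_beta_of_star_lam J_star t

theorem Head.star_of_star (h : Head t u) (htv : t ↠ v) (hne : t ≠ v) : u ↠ v := by
  rcases htv.cases_head with rfl | ⟨w, htw, hwv⟩
  · exact absurd rfl hne
  · rwa [h.det htw]

theorem head_app_lift_cases {d : ℕ} {s : Lam} (h : Head (app (t.lift d) s) v) :
    (∃ c, t = lam c ∧ v = (c.lift (d + 1)).subst 0 s) ∨ ∃ u, Head t u ∧ v = app (u.lift d) s := by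
  generalize hL : t.lift d = L at h
  cases h with
  | beta c _ =>
    obtain ⟨c₀, rfl, rfl⟩ := eq_lam_of_lift_eq_lam hL
    exact .inl ⟨c₀, rfl, rfl⟩
  | appL _ h _ =>
    subst hL
    obtain ⟨u, hu, rfl⟩ := exists_head_of_head_lift h
    exact .inr ⟨u, hu, rfl⟩

theorem star_eta_of_star_lam {b : Lam} (h : t ↠ lam b) (s : Lam) :
    lam (app (t.lift 0) s) ↠ lam ((b.lift 1).subst 0 s) :=
  star_lam (star_beta_of_star_lam (star_lift h 0) s)

inductive Sim : Lam → Lam → Prop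
  | var (n : ℕ) : Sim (var n) (var n)
  | lam {t t' : Lam} : Sim t t' → Sim (lam t) (lam t')
  | app {t t' s s' : Lam} : Sim t t' → Sim s s' → Sim (app t s) (app t' s')
  | I_J : Sim Iterm Jterm
  | J_app {t t' : Lam} : Sim t t' → Sim t (app Jterm t')
  | eta {t t' s : Lam} : Sim t t' → Sim (var 0) s → Sim t (lam (app (t'.lift 0) s))

namespace Sim

variable {t' s s' a a' b b' : Lam}

protected theorem refl : ∀ t : Lam, Sim t t
  | .var n => .var n
  | .lam t => .lam (Sim.refl t)
  | .app t s => .app (Sim.refl t) (Sim.refl s)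

theorem var_zero_J_app : Sim (.var 0) (.app Jterm (.var 0)) := .J_app (.var 0)

protected theorem lift (h : Sim t t') (d : ℕ) : Sim (t.lift d) (t'.lift d) := by
  induction h generalizing d with
  | var n => simp only [Lam.lift]; split_ifs <;> exact .var _
  | lam _ ih => exact .lam (ih _)
  | app _ _ ih₁ ih₂ => exact .app (ih₁ d) (ih₂ d)
  | I_J => simpa using I_J
  | J_app _ ih => simpa [Lam.lift] using (ih d).J_app
  | eta _ _ ih ihs =>
    rw [Lam.lift, Lam.lift, ← lift_lift _ (Nat.zero_le d)]
    simpa [Lam.lift] using (ih d).eta (ihs (d + 1))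

protected theorem subst (h : Sim t t') (hs : Sim s s') (k : ℕ) :
    Sim (t.subst k s) (t'.subst k s') := by
  induction h generalizing s s' k with
  | var n => simp only [Lam.subst]; split_ifs <;> first | exact hs | exact .var _
  | lam _ ih => exact .lam (ih (hs.lift 0) _)
  | app _ _ ih₁ ih₂ => exact .app (ih₁ hs k) (ih₂ hs k)
  | I_J => simpa using I_J
  | J_app _ ih => simpa [Lam.subst] using (ih hs k).J_app
  | eta _ _ ih ihs =>
    rw [Lam.subst, Lam.subst, ← lift_subst_of_le _ _ (Nat.zero_le k)]
    simpa [Lam.subst] using (ih hs k).eta (ihs (hs.lift 0) (k + 1))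

theorem subst_lift_one (h : Sim a b) (hs : Sim (.var 0) s) : Sim a ((b.lift 1).subst 0 s) := by
  simpa only [subst_lift_succ] using (h.lift 1).subst hs 0

theorem exists_star_lam (h : Sim (.lam a) u) : ∃ b, u ↠ .lam b ∧ Sim a b := by
  generalize ht : Lam.lam a = t at h
  induction h with
  | var | app => cases ht
  | lam h => cases ht; exact ⟨_, .refl, h⟩
  | I_J => cases ht; exact ⟨_, J_star, .eta (.var 0) var_zero_J_app⟩
  | J_app _ ih =>
    obtain ⟨b, hb, hab⟩ := ih ht
    exact ⟨_, (app_J_star _).trans (star_eta_of_star_lam hb _), hab.subst_lift_one var_zero_J_app⟩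
  | eta _ hs ih =>
    obtain ⟨b, hb, hab⟩ := ih ht
    exact ⟨_, star_eta_of_star_lam hb _, hab.subst_lift_one hs⟩

theorem lam_inv {m : Lam} (h : Sim t (.lam m)) :
    (∃ a, t = .lam a) ∨ ∃ t₁ s, m = .app (t₁.lift 0) s ∧ Sim t t₁ ∧ Sim (.var 0) s := by
  cases h with
  | lam => exact .inl ⟨_, rfl⟩
  | eta h hs => exact .inr ⟨_, _, rfl, h, hs⟩

theorem eta_beta (h : Sim t (.lam b)) (hs : Sim (.var 0) s) :
    Sim t (.lam ((b.lift 1).subst 0 s)) := by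
  cases h with
  | lam h => exact .lam (h.subst_lift_one hs)
  | eta h hs₁ =>
    rename_i t₁ _
    have ht₁ : ((t₁.lift 0).lift 1).subst 0 s = t₁.lift 0 := by
      rw [← lift_lift t₁ le_rfl, subst_lift]
    simp only [Lam.lift, Lam.subst, ht₁]
    exact h.eta (hs₁.subst_lift_one hs)

theorem exists_star_eta {w w₀ : Lam} (hw : t ↠ w₀) (h : Sim w w₀) (hs : Sim (.var 0) s) :
    ∃ w', .lam (.app (t.lift 0) s) ↠ w' ∧ Sim w w' := by
  rcases star_app_cases (star_lift hw 0) s with ⟨p, hp, hl⟩ | ⟨_, hl⟩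
  · obtain ⟨p₀, rfl, rfl⟩ := eq_lam_of_lift_eq_lam hp
    exact ⟨_, star_lam hl, h.eta_beta hs⟩
  · exact ⟨_, star_lam hl, h.eta hs⟩

theorem app_subst_eta {t₁ : Lam} (ha : Sim a t₁) (hs : Sim (.var 0) s) (hb : Sim b b') :
    Sim (.app a b) ((Lam.app (t₁.lift 0) s).subst 0 b') := by
  rw [Lam.subst, subst_lift]
  exact ha.app (hs.subst hb 0)

theorem app_star {w w' : Lam} (h : Sim w w') (hw : a ↠ w) (hw' : a' ↠ w') (hb : Sim b b') :
    ∃ v v', .app a b ↠ v ∧ .app a' b' ↠ v' ∧ Sim v v' := by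
  rcases star_app_cases hw b with ⟨p, rfl, hl⟩ | ⟨hn, hl⟩
  · obtain ⟨p', hp', hpp'⟩ := h.exists_star_lam
    exact ⟨_, _, hl, star_beta_of_star_lam (hw'.trans hp') b', hpp'.subst hb 0⟩
  · rcases star_app_cases hw' b' with ⟨m, rfl, hr⟩ | ⟨_, hr⟩
    · rcases h.lam_inv with ⟨c, rfl⟩ | ⟨t₁, s, rfl, hwt, hs⟩
      · exact absurd rfl (hn c)
      · exact ⟨_, _, hl, hr, hwt.app_subst_eta hs hb⟩
    · exact ⟨_, _, hl, hr, h.app hb⟩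

theorem forward_step (h : Sim t t') (hu : Head t u) :
    ∃ w w', u ↠ w ∧ t' ↠ w' ∧ Sim w w' := by
  induction h generalizing u with
  | var => cases hu
  | I_J => exact absurd hu hnf_I.not_head
  | lam _ ih =>
    cases hu with | abs hu =>
    obtain ⟨w, w', hw, hw', h⟩ := ih hu
    exact ⟨_, _, star_lam hw, star_lam hw', h.lam⟩
  | app ha hb iha _ =>
    cases hu with
    | beta =>
      obtain ⟨c, hc, hac⟩ := ha.exists_star_lam
      exact ⟨_, _, .refl, star_beta_of_star_lam hc _, hac.subst hb 0⟩
    | appL _ hu =>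
      obtain ⟨w, w', hw, hw', h⟩ := iha hu
      exact h.app_star hw hw' hb
  | J_app _ ih =>
    obtain ⟨w, w₀, hw, hw₀, h⟩ := ih hu
    obtain ⟨w', hw', h'⟩ := h.exists_star_eta hw₀ var_zero_J_app
    exact ⟨w, w', hw, (app_J_star _).trans hw', h'⟩
  | eta _ hs ih =>
    obtain ⟨w, w₀, hw, hw₀, h⟩ := ih hu
    obtain ⟨w', hw', h'⟩ := h.exists_star_eta hw₀ hs
    exact ⟨w, w', hw, hw', h'⟩

theorem backward_step {u' : Lam} (h : Sim t t') (hu' : Head t' u') :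
    ∃ w w', t ↠ w ∧ u' ↠ w' ∧ Sim w w' := by
  induction h generalizing u' with
  | var => cases hu'
  | lam _ ih =>
    cases hu' with | abs hu' =>
    obtain ⟨w, w', hw, hw', h⟩ := ih hu'
    exact ⟨_, _, star_lam hw, star_lam hw', h.lam⟩
  | I_J =>
    obtain ⟨b, hb, h⟩ := exists_star_lam I_J
    exact ⟨_, _, .refl, hu'.star_of_star hb Lam.noConfusion, h.lam⟩
  | J_app h _ =>
    exact ⟨_, _, .refl, hu'.star_of_star (app_J_star _) Lam.noConfusion, h.eta var_zero_J_app⟩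
  | eta h hs ih =>
    cases hu' with | abs hu' =>
    rcases head_app_lift_cases hu' with ⟨c, rfl, rfl⟩ | ⟨u, hu, rfl⟩
    · exact ⟨_, _, .refl, .refl, h.eta_beta hs⟩
    · obtain ⟨w, w₀, hw, hw₀, h⟩ := ih hu
      obtain ⟨w', hw', h'⟩ := h.exists_star_eta hw₀ hs
      exact ⟨w, w', hw, hw', h'⟩
  | app ha hb iha _ =>
    cases hu' with
    | beta m _ =>
      rcases ha.lam_inv with ⟨a₀, rfl⟩ | ⟨t₁, s, rfl, hat, hs⟩
      · obtain ⟨c, hc, hac⟩ := ha.exists_star_lam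
        obtain ⟨c', hc', hmc⟩ := star_lam_inv hc
        cases hc'
        exact ⟨_, _, .single (.beta a₀ _), star_subst hmc 0 _, hac.subst hb 0⟩
      · exact ⟨_, _, .refl, .refl, hat.app_subst_eta hs hb⟩
    | appL _ hu' =>
      obtain ⟨w, w', hw, hw', h⟩ := iha hu'
      exact h.app_star hw hw' hb

theorem varApp_left (h : Sim t t') (ht' : VarApp t') : VarApp t := by
  induction h with
  | var n => exact .var n
  | lam | eta => cases ht'
  | app _ _ ih => cases ht' with | app _ ht' => exact (ih ht').app _
  | I_J => exact absurd ht' not_varApp_J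
  | J_app => cases ht' with | app _ ht' => exact absurd ht' not_varApp_J

theorem hnf_left (h : Sim t t') (ht' : Hnf t') : Hnf t := by
  induction h with
  | var n => exact .base (.var n)
  | lam _ ih =>
    cases ht' with
    | base hv => cases hv
    | lam ht' => exact (ih ht').lam
  | app h₁ _ _ _ =>
    cases ht' with | base hv =>
    cases hv with | app _ hv => exact .base ((h₁.varApp_left hv).app _)
  | I_J => exact hnf_I
  | J_app =>
    cases ht' with | base hv =>
    cases hv with | app _ hv => exact absurd hv not_varApp_J
  | eta h _ _ _ =>
    cases ht' with
    | base hv => cases hv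
    | lam ht' =>
      cases ht' with | base hv =>
      cases hv with | app _ hv => exact .base (h.varApp_left hv.of_lift)

theorem solvable_foldl_of_varApp (h : Sim t t') (ht : VarApp t) :
    ∀ args : List Lam, Solvable (args.foldl .app t') := by
  induction h with
  | var n => exact fun args => ⟨_, .refl, .base ((VarApp.var n).foldl args)⟩
  | lam => cases ht
  | I_J => exact absurd ht (by rintro ⟨⟩)
  | app _ _ ih => cases ht with | app _ ht => exact fun args => ih ht (_ :: args)
  | J_app _ ih =>
    intro args
    rw [solvable_foldl_iff_of_star (app_J_star _)]
    exact solvable_foldl_eta (ih ht) args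
  | eta _ _ ih => exact solvable_foldl_eta (ih ht)

theorem solvable_of_hnf (ht : Hnf t) (h : Sim t t') : Solvable t' := by
  induction ht generalizing t' with
  | base hv => simpa using h.solvable_foldl_of_varApp hv []
  | lam _ ih =>
    obtain ⟨b, hb, hab⟩ := h.exists_star_lam
    exact (ih hab).lam.of_star hb

theorem solvable_right (h : Sim t t') (ht : Solvable t) : Solvable t' := by
  have hacc := ht.acc.transGen
  clear ht
  induction hacc generalizing t' with
  | intro t _ ih =>
    rcases hnf_or_exists_head t with ht | ⟨u, hu⟩
    · exact solvable_of_hnf ht h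
    · obtain ⟨w, w', huw, hw', h'⟩ := h.forward_step hu
      exact (ih w (transGen_swap.mpr (.head' hu huw)) h').of_star hw'

theorem solvable_left (h : Sim t t') (ht' : Solvable t') : Solvable t := by
  have hacc := ht'.acc.transGen
  clear ht'
  induction hacc generalizing t with
  | intro t' _ ih =>
    rcases hnf_or_exists_head t' with ht' | ⟨u', hu'⟩
    · exact ⟨t, .refl, h.hnf_left ht'⟩
    · obtain ⟨w, w', hw, huw', h'⟩ := h.backward_step hu'
      exact (ih w' (transGen_swap.mpr (.head' hu' huw')) h').of_star hw

theorem plug_I_J : ∀ C : Ctx, Sim (C.plug Iterm) (C.plug Jterm)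
  | .hole => .I_J
  | .lam C => .lam (plug_I_J C)
  | .appL C v => .app (plug_I_J C) (.refl v)
  | .appR u C => .app (.refl u) (plug_I_J C)

end Sim

end Lam

/-- `I` and `J` are operationally equivalent. -/
theorem I_operationally_equivalent_J (C : Ctx) :
    Lam.Solvable (C.plug Iterm) ↔ Lam.Solvable (C.plug Jterm) :=
  ⟨(Lam.Sim.plug_I_J C).solvable_right, (Lam.Sim.plug_I_J C).solvable_left⟩
end

section
/- For every λH-term T and every finite sequence of λH-terms U₁, ..., Uₙ, one has E(T U₁ ... Uₙ) = E(E(T) E(U₁) ... E(Uₙ)). -/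
/-- λH-terms: untyped λ-terms in de Bruijn notation with a distinguished
constant `H`. -/
inductive LamH : Type
  | var : ℕ → LamH
  | H : LamH
  | lam : LamH → LamH
  | app : LamH → LamH → LamH

namespace LamH

/-- Lift (shift by one) the de Bruijn indices ≥ `d`. -/
def lift : LamH → ℕ → LamH
  | var n, d => if n < d then var n else var (n + 1)
  | H, _ => H
  | lam u, d => lam (lift u (d + 1))
  | app u v, d => app (lift u d) (lift v d)

/-- Capture-avoiding substitution `t[s/k]`. -/
def subst : LamH → ℕ → LamH → LamH
  | var n, k, s => if n = k then s else if k < n then var (n - 1) else var n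
  | H, _, _ => H
  | lam u, k, s => lam (subst u (k + 1) (lift s 0))
  | app u v, k, s => app (subst u k s) (subst v k s)

/-- Head reduction `→t` contracting the head β-redex:
`λx̄.((λx.U) V) V₁ ... Vₖ →t λx̄.(U[V/x]) V₁ ... Vₖ`. -/
inductive Head : LamH → LamH → Prop
  | beta (u v : LamH) : Head (app (lam u) v) (subst u 0 v)
  | appL {u u' : LamH} (v : LamH) : Head u u' → (∀ w, u ≠ lam w) →
      Head (app u v) (app u' v)
  | abs {u u' : LamH} : Head u u' → Head (lam u) (lam u')

/-- `headH t = true` iff `t` is of the form `H U₁ U₂ ... Uₙ` with `n ≥ 0`. -/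
def headH : LamH → Bool
  | H => true
  | app u _ => headH u
  | _ => false

/-- Remove the head occurrence of `H`: `dropH (H U₁ U₂ ... Uₙ) = U₁ U₂ ... Uₙ`
(for `n ≥ 1`). -/
def dropH : LamH → LamH
  | app H v => v
  | app u v => app (dropH u) v
  | t => t

theorem dropH_app_size_lt : ∀ u v : LamH, headH u = true →
    sizeOf (dropH (app u v)) < sizeOf (app u v) := by
  intro u
  induction u with
  | var n => intro v h; simp [headH] at h
  | H => intro v _; simp [dropH]
  | lam u ih => intro v h; simp [headH] at h
  | app u1 u2 ih1 ih2 =>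
    intro v h
    have h1 : headH u1 = true := by simpa [headH] using h
    have : dropH (app (app u1 u2) v) = app (dropH (app u1 u2)) v := by
      cases u1 <;> rfl
    rw [this]
    have := ih1 u2 h1
    simp only [app.sizeOf_spec] at *
    omega

/-- The extraction map `E`: it erases `H` in head position of an application.
`E(x) = x`, `E(H) = H`, `E(λx.U) = λx.E(U)`,
`E(U V) = (E(U) E(V))` if `U` is not of the form `H U₁ ... Uₙ`, and
`E(H U₁ U₂ ... Uₙ) = E(U₁ U₂ ... Uₙ)`. -/
def E : LamH → LamH
  | var n => var n
  | H => H
  | lam u => lam (E u)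
  | app u v =>
    if h : headH u = true then E (dropH (app u v)) else app (E u) (E v)
termination_by t => sizeOf t
decreasing_by
  all_goals first
    | exact dropH_app_size_lt u v (by assumption)
    | (simp; omega)
    | simp

end LamH

/-!
`E` is idempotent and satisfies `E (E a E b) = E (a b)`; the latter follows by recursion along
the definition of `E`, because erasing a head `H` commutes with applying the term to a further
argument. Hence `t` may be replaced by `E t` at the head of any application spine, and the
theorem follows by induction on the list of arguments.
-/

namespace LamH

theorem E_app_of_headH {u : LamH} (h : headH u = true) (v : LamH) :
    E (app u v) = E (dropH (app u v)) := by
  rw [E, dif_pos h]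

theorem E_app_of_not_headH {u : LamH} (h : headH u = false) (v : LamH) :
    E (app u v) = app (E u) (E v) := by
  rw [E, dif_neg (by simp [h])]

theorem dropH_app_app (u v w : LamH) : dropH (app (app u v) w) = app (dropH (app u v)) w := by
  cases u <;> rfl

theorem headH_E_of_not_headH {t : LamH} (h : headH t = false) : headH (E t) = false := by
  induction t with
  | var n => rw [E]; rfl
  | H => simp [headH] at h
  | lam u _ => rw [E]; rfl
  | app u v ihu _ =>
    rw [headH] at h
    rw [E_app_of_not_headH h, headH, ihu h]

theorem E_idem (t : LamH) : E (E t) = E t := by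
  induction t using E.induct with
  | case1 n => rw [E, E]
  | case2 => rw [E, E]
  | case3 u ih => rw [E, E, ih]
  | case4 u v h ih => rw [E_app_of_headH h, ih]
  | case5 u v h ihu ihv =>
    rw [Bool.not_eq_true] at h
    rw [E_app_of_not_headH h, E_app_of_not_headH (headH_E_of_not_headH h), ihu, ihv]

theorem E_app_E_E_of_not_headH {a : LamH} (h : headH a = false) (b : LamH) :
    E (app (E a) (E b)) = E (app a b) := by
  rw [E_app_of_not_headH h, E_app_of_not_headH (headH_E_of_not_headH h), E_idem, E_idem]

theorem E_app_E_E (a b : LamH) : E (app (E a) (E b)) = E (app a b) := by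
  induction a using E.induct generalizing b with
  | case1 n => exact E_app_E_E_of_not_headH rfl b
  | case2 => rw [E, E_app_of_headH rfl, E_app_of_headH rfl, dropH, dropH, E_idem]
  | case3 u _ => exact E_app_E_E_of_not_headH rfl b
  | case4 u v h ih =>
    rw [E_app_of_headH h, ih, E_app_of_headH (u := app u v) h, dropH_app_app]
  | case5 u v h _ _ =>
    exact E_app_E_E_of_not_headH (by simpa [headH] using h) b

theorem E_app_E_left (a b : LamH) : E (app (E a) b) = E (app a b) := by
  rw [← E_app_E_E, E_idem, E_app_E_E]

theorem E_foldl_app_E (l : List LamH) (t : LamH) :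
    E (l.foldl app (E t)) = E (l.foldl app t) := by
  induction l generalizing t with
  | nil => exact E_idem t
  | cons u l ih => rw [List.foldl_cons, List.foldl_cons, ← ih, E_app_E_left, ih]

end LamH

open LamH in
/-- For every λH-term `T` and finite sequence `U₁, ..., Uₙ`,
`E(T U₁ ... Uₙ) = E(E(T) E(U₁) ... E(Uₙ))`. -/
theorem E_apps (T : LamH) (Us : List LamH) :
    LamH.E (Us.foldl LamH.app T) =
      LamH.E ((Us.map LamH.E).foldl LamH.app (LamH.E T)) := by
  induction Us generalizing T with
  | nil => exact (E_idem T).symm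
  | cons U Us ih =>
    calc E ((U :: Us).foldl app T)
        = E ((Us.map E).foldl app (E (app T U))) := ih (app T U)
      _ = E ((Us.map E).foldl app (E (app (E T) (E U)))) := by rw [E_app_E_E]
      _ = E (((U :: Us).map E).foldl app (E T)) := E_foldl_app_E _ _
end

section
/- Let U₁, U₂, V₁, V₂ be λH-terms with E(U₁) = E(U₂) and E(V₁) = E(V₂). Then for every variable x, E(U₁[V₁/x]) = E(U₂[V₂/x]). -/
namespace LamH

/-!
The extraction `E (U V)` depends only on `E U` and `E V`: it is `E V` when `E U = H` and
`E U E V` otherwise. Consequently `E` commutes with lifting and is idempotent, and an induction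
on `U` gives `E (U[V/x]) = E ((E U)[E V/x])`, which only depends on `E U` and `E V`.
-/

def happ : LamH → LamH → LamH
  | H, b => b
  | a, b => app a b

theorem happ_of_ne_H {a : LamH} (ha : a ≠ H) (b : LamH) : happ a b = app a b := by
  cases a <;> first | rfl | contradiction

theorem dropH_app {u : LamH} (hu : u ≠ H) (v : LamH) : dropH (app u v) = app (dropH u) v := by
  cases u <;> first | rfl | contradiction

theorem E_ne_H_of_headH_eq_false {t : LamH} (h : headH t = false) : E t ≠ H := by
  cases t with
  | var n => simp [E]
  | H => simp [headH] at h
  | lam u => simp [E]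
  | app u v =>
    have hu : headH u = false := by simpa [headH] using h
    rw [E]
    simp [hu]

theorem E_app (u v : LamH) : E (app u v) = happ (E u) (E v) := by
  by_cases h : headH u = true
  · match u, h with
    | H, _ => simp [E, headH, dropH, happ]
    | app a b, h =>
      have ha : headH a = true := by simpa [headH] using h
      have hE : E (app (app a b) v) = E (app (dropH (app a b)) v) := by
        rw [E, dif_pos h, dropH_app (by simp)]
      have hEab : E (app a b) = E (dropH (app a b)) := by rw [E, dif_pos ha]
      rw [hE, E_app (dropH (app a b)) v, hEab]
  · rw [E, dif_neg h, happ_of_ne_H (E_ne_H_of_headH_eq_false (by simpa using h))]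
termination_by sizeOf u
decreasing_by exact dropH_app_size_lt a b ha

theorem E_happ (a b : LamH) : E (happ a b) = E (app a b) := by
  by_cases ha : a = H
  · subst ha
    simp [happ, E_app, E]
  · rw [happ_of_ne_H ha]

theorem lift_eq_H_iff {a : LamH} {d : ℕ} : lift a d = H ↔ a = H := by
  cases a <;> simp only [lift, reduceCtorEq]
  split <;> simp

theorem lift_happ (a b : LamH) (d : ℕ) : lift (happ a b) d = happ (lift a d) (lift b d) := by
  by_cases ha : a = H
  · subst ha
    rfl
  · rw [happ_of_ne_H ha, happ_of_ne_H (mt lift_eq_H_iff.mp ha), lift]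

theorem E_lift (t : LamH) (d : ℕ) : E (lift t d) = lift (E t) d := by
  induction t generalizing d with
  | var n => simp only [lift, E]; split <;> simp [E]
  | H => simp [lift, E]
  | lam u ih => simp only [lift, E, ih]
  | app u v ihu ihv => simp only [lift, E_app, ihu, ihv, lift_happ]

theorem E_subst_happ (a b s : LamH) (k : ℕ) :
    E (subst (happ a b) k s) = E (subst (app a b) k s) := by
  by_cases ha : a = H
  · subst ha
    simp [happ, subst, E_app, E]
  · rw [happ_of_ne_H ha]

theorem E_subst_E (t s : LamH) (k : ℕ) : E (subst t k s) = E (subst (E t) k (E s)) := by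
  induction t generalizing k s with
  | var n =>
    simp only [subst, E]
    split
    · exact (E_idem s).symm
    · split <;> rfl
  | H => simp [subst, E]
  | lam u ih => simp only [subst, E, ih, E_lift]
  | app u v ihu ihv => rw [E_app, subst, E_subst_happ, subst, E_app, E_app, ihu, ihv]

end LamH

/-- If `E(U₁) = E(U₂)` and `E(V₁) = E(V₂)`, then for every variable `x`,
`E(U₁[V₁/x]) = E(U₂[V₂/x])`. -/
theorem E_subst_congr (U₁ U₂ V₁ V₂ : LamH)
    (hU : LamH.E U₁ = LamH.E U₂) (hV : LamH.E V₁ = LamH.E V₂) (x : ℕ) :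
    LamH.E (LamH.subst U₁ x V₁) = LamH.E (LamH.subst U₂ x V₂) := by
  rw [LamH.E_subst_E U₁, LamH.E_subst_E U₂, hU, hV]
end

section
/- Let U be a λH-term and let I = λx.x. Then U is I-t-solvable if and only if U[I/H] (the λ-term obtained from U by substituting I for every occurrence of the constant H) is solvable. -/
namespace LamH

/-- Terms of the form `x V₁ ... Vₖ` for a variable `x`. -/
inductive VarApp : LamH → Prop
  | var (n : ℕ) : VarApp (var n)
  | app {u : LamH} (v : LamH) : VarApp u → VarApp (app u v)

/-- Head normal forms of λH-terms: `λx₁...λxₘ.H` or `λx₁...λxₘ.(x V₁ ... Vₖ)`. -/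
inductive HnfH : LamH → Prop
  | H : HnfH H
  | base {t : LamH} : VarApp t → HnfH t
  | lam {t : LamH} : HnfH t → HnfH (lam t)

end LamH

namespace LamH

/-- The I-reduction: `λx₁...λxₘ.(H U₁ U₂ ... Uₙ) →I λx₁...λxₘ.(U₁ U₂ ... Uₙ)`
for `n ≥ 1`. -/
inductive Ired : LamH → LamH → Prop
  | head (v : LamH) : Ired (app H v) v
  | appL {u u' : LamH} (v : LamH) : Ired u u' → (∀ w, u ≠ lam w) →
      Ired (app u v) (app u' v)
  | abs {u u' : LamH} : Ired u u' → Ired (lam u) (lam u')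

end LamH

namespace LamH

/-- Substituting the λH-term `s` for every occurrence of the constant `H`. -/
def substH : LamH → LamH → LamH
  | var n, _ => var n
  | H, s => s
  | lam u, s => lam (substH u s)
  | app u v, s => app (substH u s) (substH v s)

/-- Head normal forms of plain λ-terms: `λx₁...λxₘ.(x V₁ ... Vₖ)`. -/
inductive Hnf : LamH → Prop
  | base {t : LamH} : VarApp t → Hnf t
  | lam {t : LamH} : Hnf t → Hnf (lam t)

/-- A λ-term (without `H`) is solvable iff its head reduction sequence
terminates in a head normal form. -/
def Solvable (t : LamH) : Prop :=
  ∃ t', Relation.ReflTransGen Head t t' ∧ Hnf t'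

end LamH

namespace LamH

/-- A λH-term is I-t-solvable iff some finite sequence of I-reductions and
head reductions starting from it reaches a head normal form. -/
def ItSolvable (t : LamH) : Prop :=
  ∃ t', Relation.ReflTransGen (fun a b => Ired a b ∨ Head a b) t t' ∧ HnfH t'

/-- `I = λx.x`. -/
def Iterm : LamH := lam (var 0)

/-!
Substituting `I` for `H` turns an I-redex `H V` into the head β-redex `I V`, which contracts
to `V`, and maps head β-steps to head β-steps; so every I- or head step of `U` becomes a head
step of `U[I/H]`. Conversely every head step of `U[I/H]` is the image of such a step of `U`: the
only head redexes not already present in `U` are the `I V` coming from `H V`. As the head normal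
forms of `U` and of `U[I/H]` correspond (`λx.x` being the image of `H`), reductions to head
normal form transfer in both directions.
-/

end LamH

theorem Relation.ReflTransGen.exists_lift_of_forall_exists {α β : Type*}
    {r : α → α → Prop} {p : β → β → Prop} (f : α → β)
    (h : ∀ a b, p (f a) b → ∃ a', r a a' ∧ f a' = b) {a : α} {b : β}
    (hab : Relation.ReflTransGen p (f a) b) :
    ∃ a', Relation.ReflTransGen r a a' ∧ f a' = b := by
  generalize hfa : f a = c at hab
  induction hab using Relation.ReflTransGen.head_induction_on generalizing a with
  | refl => exact ⟨a, .refl, hfa⟩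
  | head hstep _ ih =>
    subst hfa
    obtain ⟨a₁, hr, rfl⟩ := h _ _ hstep
    obtain ⟨a', hrest, hfa'⟩ := ih rfl
    exact ⟨a', .head hr hrest, hfa'⟩

namespace LamH

section ClosedSubstH

variable {s : LamH}

theorem substH_lift (hlift : ∀ d, lift s d = s) (u : LamH) (d : ℕ) :
    substH (lift u d) s = lift (substH u s) d := by
  induction u generalizing d with
  | var n => simp only [lift, substH]; split <;> simp [substH, *]
  | H => simp [lift, substH, hlift]
  | lam u ih => simp [lift, substH, ih]
  | app u v ihu ihv => simp [lift, substH, ihu, ihv]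

theorem substH_subst (hlift : ∀ d, lift s d = s) (hsubst : ∀ k v, subst s k v = s)
    (u : LamH) (k : ℕ) (v : LamH) :
    substH (subst u k v) s = subst (substH u s) k (substH v s) := by
  induction u generalizing k v with
  | var n =>
    simp only [subst, substH]
    by_cases h1 : n = k
    · simp [h1]
    · by_cases h2 : k < n <;> simp [h1, h2, substH]
  | H => simp [subst, substH, hsubst]
  | lam u ih => simp [subst, substH, ih, substH_lift hlift]
  | app u w ihu ihw => simp [subst, substH, ihu, ihw]

theorem substH_ne_lam {a : LamH} (ha : a ≠ H) (hn : ∀ w, a ≠ lam w) :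
    ∀ w, a.substH s ≠ lam w := by
  cases a <;> simp_all [substH]

theorem Head.substH (hlift : ∀ d, lift s d = s) (hsubst : ∀ k v, subst s k v = s)
    {u u' : LamH} (h : Head u u') : Head (u.substH s) (u'.substH s) := by
  induction h with
  | beta a b =>
    rw [LamH.substH, LamH.substH, substH_subst hlift hsubst]
    exact Head.beta _ _
  | appL _ h hn ih => exact Head.appL _ ih (substH_ne_lam (by rintro rfl; cases h) hn)
  | abs _ ih => exact Head.abs ih

theorem VarApp.substH {u : LamH} (h : VarApp u) : VarApp (u.substH s) := by
  induction h with
  | var n => exact VarApp.var n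
  | app v _ ih => exact VarApp.app _ ih

theorem HnfH.hnf_substH (hs : Hnf s) {u : LamH} (h : HnfH u) : Hnf (u.substH s) := by
  induction h with
  | H => exact hs
  | base hv => exact Hnf.base hv.substH
  | lam _ ih => exact Hnf.lam ih

theorem VarApp.of_substH (hs : ¬VarApp s) {u : LamH} (h : VarApp (u.substH s)) : VarApp u := by
  induction u with
  | var n => exact VarApp.var n
  | H => exact absurd h hs
  | lam w _ => cases h
  | app a b iha _ =>
    cases h with
    | app _ h' => exact VarApp.app b (iha h')

theorem HnfH.of_hnf_substH (hs : ¬VarApp s) {u : LamH} (h : Hnf (u.substH s)) : HnfH u := by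
  induction u with
  | var n => exact HnfH.base (VarApp.var n)
  | H => exact HnfH.H
  | lam w ih =>
    cases h with
    | base hv => cases hv
    | lam h' => exact HnfH.lam (ih h')
  | app a b _ _ =>
    cases h with
    | base hv => exact HnfH.base (VarApp.of_substH hs hv)

end ClosedSubstH

theorem lift_Iterm (d : ℕ) : lift Iterm d = Iterm := by
  simp [Iterm, lift]

theorem subst_Iterm (k : ℕ) (v : LamH) : subst Iterm k v = Iterm := by
  simp [Iterm, subst]

theorem Ired.head_substH_Iterm {u u' : LamH} (h : Ired u u') :
    Head (u.substH Iterm) (u'.substH Iterm) := by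
  induction h with
  | head v =>
    simpa [Iterm, subst, substH] using Head.beta (var 0) (substH v Iterm)
  | appL _ h hn ih => exact Head.appL _ ih (substH_ne_lam (by rintro rfl; cases h) hn)
  | abs _ ih => exact Head.abs ih

theorem exists_step_of_head_substH_Iterm {U W : LamH} (h : Head (U.substH Iterm) W) :
    ∃ U', (Ired U U' ∨ Head U U') ∧ U'.substH Iterm = W := by
  induction U generalizing W with
  | var n => cases h
  | H => cases h with | abs h' => cases h'
  | lam u ih =>
    cases h with
    | abs h' =>
      obtain ⟨u', hstep, rfl⟩ := ih h'
      exact ⟨lam u', hstep.imp Ired.abs Head.abs, rfl⟩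
  | app u v ihu _ =>
    cases u with
    | var n => cases h with | appL _ h' _ => cases h'
    | H =>
      cases h with
      | beta => exact ⟨v, Or.inl (Ired.head v), by simp [subst]⟩
      | appL _ _ hn => exact absurd rfl (hn (var 0))
    | lam u₁ =>
      cases h with
      | beta =>
        exact ⟨subst u₁ 0 v, Or.inr (Head.beta _ _),
          substH_subst lift_Iterm subst_Iterm _ _ _⟩
      | appL _ _ hn => exact absurd rfl (hn _)
    | app a b =>
      cases h with
      | appL _ h' _ =>
        obtain ⟨U', hstep, rfl⟩ := ihu h'
        refine ⟨app U' v, ?_, rfl⟩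
        exact hstep.imp (Ired.appL v · (by simp)) (Head.appL v · (by simp))

/-- `U` is I-t-solvable iff `U[I/H]` is solvable. -/
theorem ItSolvable_iff_substH_I_solvable (U : LamH) :
    ItSolvable U ↔ Solvable (substH U Iterm) := by
  constructor
  · rintro ⟨U', hsteps, hnf⟩
    have step : ∀ a b, Ired a b ∨ Head a b → Head (a.substH Iterm) (b.substH Iterm) :=
      fun _ _ hab => hab.elim Ired.head_substH_Iterm (Head.substH lift_Iterm subst_Iterm)
    exact ⟨_, Relation.ReflTransGen.lift _ step _ _ hsteps,
      hnf.hnf_substH (Hnf.lam (Hnf.base (VarApp.var 0)))⟩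
  · rintro ⟨T, hsteps, hnf⟩
    obtain ⟨U', hsteps', rfl⟩ := hsteps.exists_lift_of_forall_exists _
      (fun _ _ => exists_step_of_head_substH_Iterm)
    exact ⟨U', hsteps', HnfH.of_hnf_substH (by rintro ⟨⟩) hnf⟩

end LamH
end

section
/- The J-reduction is terminating: there is no infinite sequence of λH-terms U₀ →J U₁ →J U₂ →J ⋯ (every λH-term is strongly normalizing for →J). -/
namespace LamH

/-- The J-reduction: `λx₁...λxₘ.(H U₁ U₂ U₃ ... Uₙ) →J λx₁...λxₘ.(U₁ (H U₂) U₃ ... Uₙ)`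
for `n ≥ 2`, and `λx₁...λxₘ.(H U₁) →J λx₁...λxₘ.U₁`. -/
inductive Jred : LamH → LamH → Prop
  | one (v : LamH) : Jred (app H v) v
  | two (u v : LamH) : Jred (app (app H u) v) (app u (app H v))
  | appL {u u' : LamH} (v : LamH) : Jred u u' → (∀ w, u ≠ lam w) →
      (∀ w, u ≠ app H w) → Jred (app u v) (app u' v)
  | abs {u u' : LamH} : Jred u u' → Jred (lam u) (lam u')

end LamH

namespace LamH

/- Squaring the weight of the function part makes `H u v` (weight `(4 + |u|)² + |v|`) heavier
than `u (H v)` (weight `|u|² + 4 + |v|`); monotonicity carries the decrease under `app _ v`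
and `lam`. -/
def weight : LamH → ℕ
  | var _ => 1
  | H => 2
  | lam u => weight u
  | app u v => weight u ^ 2 + weight v

theorem weight_pos (t : LamH) : 0 < weight t := by
  induction t <;> simp only [weight] <;> positivity

theorem Jred.weight_lt {t t' : LamH} (h : Jred t t') : weight t' < weight t := by
  induction h with
  | one v => simp only [weight]; omega
  | two u v => simp only [weight]; nlinarith [weight_pos u]
  | appL v _ _ _ ih =>
    simp only [weight]
    have := Nat.pow_lt_pow_left ih two_ne_zero
    omega
  | abs _ ih => exact ih

theorem wellFounded_flip_Jred : WellFounded (flip Jred) :=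
  Subrelation.wf Jred.weight_lt (InvImage.wf weight wellFounded_lt)

end LamH

/-- The J-reduction is terminating: there is no infinite sequence
`U₀ →J U₁ →J U₂ →J ⋯`. -/
theorem Jred_terminating (f : ℕ → LamH) :
    ¬ (∀ n : ℕ, LamH.Jred (f n) (f (n + 1))) :=
  fun h => (wellFounded_iff_isEmpty_descending_chain.1 LamH.wellFounded_flip_Jred).elim ⟨f, h⟩
end

section
/- Let U be a λH-term and let J = (Θ G), where Θ = (λx.λy.(y ((x x) y))) (λx.λy.(y ((x x) y))) is Turing's fixed point combinator and G = λx.λy.λz.(y (x z)). Then U is J-t-solvable if and only if U[J/H] (the λ-term obtained from U by substituting J for every occurrence of the constant H) is solvable. -/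
namespace LamH

/-- A λH-term is J-t-solvable iff some finite sequence of J-reductions and
head reductions starting from it reaches a head normal form. -/
def JtSolvable (t : LamH) : Prop :=
  ∃ t', Relation.ReflTransGen (fun a b => Jred a b ∨ Head a b) t t' ∧ HnfH t'

/-- `δ = λx.λy.(y ((x x) y))`. -/
def deltaTerm : LamH :=
  lam (lam (app (var 0) (app (app (var 1) (var 1)) (var 0))))

/-- Turing's fixed point combinator `Θ = δ δ`. -/
def thetaTerm : LamH := app deltaTerm deltaTerm

/-- `G = λx.λy.λz.(y (x z))`. -/
def Gterm : LamH := lam (lam (lam (app (var 1) (app (var 2) (var 0)))))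

/-- `J = (Θ G)`. -/
def Jterm : LamH := app thetaTerm Gterm

/-!
Write `Sim M N` when the λ-term `N` is `M[J/H]` up to expansions `X ↦ J X` and `X ↦ λz. X A`
(with `A` itself such an expansion of `z`) inserted anywhere. Because `J X →⁴ λz. X (J z)`,
head reduction of a simulant can mimic both J-rules, `J U₁ →⁴ λz. U₁ (J z)` and
`J U₁ U₂ →⁵ U₁ (J U₂)`, as well as β; and once applied, an inserted expansion dissolves in a few
head steps. So every `→J`/`→t` step of `M` is matched by at least one head step of `N`. Both
reductions are deterministic, so a head normal form on either side is reached in fewer and fewer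
steps along the simulation, which gives both directions. It remains to see that simulants of head
normal forms are solvable: an expansion of a head variable only ever yields terms with that same
variable at the head.
-/

open Relation

theorem acc_transGen_of_normalizes {α : Type*} {r : α → α → Prop}
    (hr : ∀ {a b c}, r a b → r a c → b = c) {a z : α} (h : ReflTransGen r a z)
    (hz : ∀ b, ¬ r z b) : Acc (fun x y => TransGen r y x) a := by
  have hacc : Acc (fun x y => r y x) a := by
    induction h using ReflTransGen.head_induction_on with
    | refl => exact ⟨_, fun b hb => absurd hb (hz b)⟩
    | head hab _ ih => exact ⟨_, fun c hc => hr hab hc ▸ ih⟩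
  have e : (fun x y => TransGen r y x) = TransGen (fun x y => r y x) := by
    funext x y
    exact propext transGen_swap.symm
  rw [e]
  exact acc_transGen_iff.mpr hacc

theorem lift_lift (t : LamH) {d e : ℕ} (h : d ≤ e) :
    lift (lift t d) (e + 1) = lift (lift t e) d := by
  induction t generalizing d e with
  | var n =>
    simp only [lift]
    split_ifs <;> simp only [lift] <;> split_ifs <;> first | rfl | (exfalso; omega)
  | H => rfl
  | lam u ih => simp only [lift]; rw [ih (by omega)]
  | app u v ihu ihv => simp only [lift]; rw [ihu h, ihv h]

theorem subst_lift_same (t : LamH) (d : ℕ) (s : LamH) : subst (lift t d) d s = t := by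
  induction t generalizing d s with
  | var n =>
    simp only [lift]
    split_ifs <;> simp only [subst] <;> split_ifs <;> first | rfl | (exfalso; omega)
  | H => rfl
  | lam u ih => simp only [lift, subst]; rw [ih]
  | app u v ihu ihv => simp only [lift, subst]; rw [ihu, ihv]

theorem subst_lift (t s : LamH) {k d : ℕ} (h : d ≤ k) :
    subst (lift t d) (k + 1) (lift s d) = lift (subst t k s) d := by
  induction t generalizing s k d with
  | var n =>
    simp only [lift, subst]
    split_ifs <;> simp only [lift, subst] <;> split_ifs <;>
      first | rfl | (exfalso; omega) | (exact congrArg var (by omega))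
  | H => rfl
  | lam u ih =>
    simp only [lift, subst]
    rw [← lift_lift s (Nat.zero_le d), ih (lift s 0) (by omega)]
  | app u v ihu ihv => simp only [lift, subst]; rw [ihu _ h, ihv _ h]

theorem lift_subst (t v : LamH) {k d : ℕ} (h : k ≤ d) :
    lift (subst t k v) d = subst (lift t (d + 1)) k (lift v d) := by
  induction t generalizing v k d with
  | var n =>
    simp only [lift, subst]
    split_ifs <;> simp only [lift, subst] <;> split_ifs <;>
      first | rfl | (exfalso; omega) | (exact congrArg var (by omega))
  | H => rfl
  | lam u ih =>
    simp only [lift, subst]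
    rw [ih (lift v 0) (by omega), lift_lift v (Nat.zero_le d)]
  | app u w ihu ihw => simp only [lift, subst]; rw [ihu _ h, ihw _ h]

theorem subst_subst (t u v : LamH) {j k : ℕ} (h : j ≤ k) :
    subst (subst t j u) k v = subst (subst t (k + 1) (lift v j)) j (subst u k v) := by
  induction t generalizing u v j k with
  | var n =>
    simp only [subst]
    split_ifs <;> (try simp only [subst]) <;> (try split_ifs) <;>
      first
        | rfl
        | (exfalso; omega)
        | (exact congrArg var (by omega))
        | (exact (subst_lift_same v j _).symm)
  | H => rfl
  | lam t ih =>
    simp only [subst]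
    rw [ih (lift u 0) (lift v 0) (by omega), lift_lift v (Nat.zero_le j),
      subst_lift u v (Nat.zero_le k)]
  | app a b iha ihb => simp only [subst]; rw [iha _ _ h, ihb _ _ h]

/-- `replace t k s` puts `s` in place of the variable `k` of `t`, leaving all other indices
unchanged (unlike `subst`, which also decrements the indices above `k`). -/
def replace (t : LamH) (k : ℕ) (s : LamH) : LamH := subst (lift t (k + 1)) k s

theorem replace_lam (t : LamH) (k : ℕ) (s : LamH) :
    replace (lam t) k s = lam (replace t (k + 1) (lift s 0)) := rfl

theorem replace_var_same (k : ℕ) (A : LamH) : replace (var k) k A = A := by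
  simp [replace, lift, subst]

theorem replace_var_of_ne {n k : ℕ} (h : n ≠ k) (A : LamH) : replace (var n) k A = var n := by
  simp only [replace, lift]
  split_ifs <;> simp only [subst] <;> split_ifs <;>
    first | rfl | (exfalso; omega)

theorem replace_self_var (t : LamH) (k : ℕ) : replace t k (var k) = t := by
  induction t generalizing k with
  | var n =>
    by_cases h : n = k
    · subst h
      exact replace_var_same n (var n)
    · exact replace_var_of_ne h _
  | H => rfl
  | lam u ih =>
    rw [replace_lam, show lift (var k) 0 = var (k + 1) by simp [lift], ih]
  | app u v ihu ihv => exact congrArg₂ app (ihu k) (ihv k)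

theorem lift_Jterm (d : ℕ) : lift Jterm d = Jterm := by
  simp [Jterm, thetaTerm, deltaTerm, Gterm, lift]

theorem subst_Jterm (k : ℕ) (s : LamH) : subst Jterm k s = Jterm := by
  simp [Jterm, thetaTerm, deltaTerm, Gterm, subst]

theorem Head.eq_app_of_ne_lam {t a : LamH} (h : Head t a) (ht : ∀ w, t ≠ lam w) :
    ∃ u v, t = app u v := by
  cases h with
  | beta u v => exact ⟨_, _, rfl⟩
  | appL v _ _ => exact ⟨_, _, rfl⟩
  | abs _ => exact absurd rfl (ht _)

theorem head_lift {t a : LamH} (h : Head t a) (d : ℕ) : Head (lift t d) (lift a d) := by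
  induction h generalizing d with
  | beta u v =>
    have := Head.beta (lift u (d + 1)) (lift v d)
    rwa [← lift_subst u v (Nat.zero_le d)] at this
  | appL v h hn ih =>
    obtain ⟨x, y, rfl⟩ := h.eq_app_of_ne_lam hn
    exact Head.appL _ (ih d) (fun w hw => by cases hw)
  | abs _ ih => exact Head.abs (ih (d + 1))

theorem head_subst {t a : LamH} (h : Head t a) (k : ℕ) (s : LamH) :
    Head (subst t k s) (subst a k s) := by
  induction h generalizing k s with
  | beta u v =>
    have := Head.beta (subst u (k + 1) (lift s 0)) (subst v k s)
    rwa [← subst_subst u v s (Nat.zero_le k)] at this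
  | appL v h hn ih =>
    obtain ⟨x, y, rfl⟩ := h.eq_app_of_ne_lam hn
    exact Head.appL _ (ih k s) (fun w hw => by cases hw)
  | abs _ ih => exact Head.abs (ih (k + 1) (lift s 0))

theorem head_replace {t a : LamH} (h : Head t a) (k : ℕ) (s : LamH) :
    Head (replace t k s) (replace a k s) :=
  head_subst (head_lift h (k + 1)) k s

theorem reflTransGen_head_lam {B Y : LamH} (h : ReflTransGen Head (lam B) Y) :
    ∃ B', Y = lam B' ∧ ReflTransGen Head B B' := by
  generalize hX : lam B = X at h
  induction h generalizing B with
  | refl => exact ⟨B, hX.symm, .refl⟩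
  | tail _ hstep ih =>
    obtain ⟨B₁, rfl, hB⟩ := ih hX
    cases hstep with
    | abs hstep => exact ⟨_, rfl, hB.tail hstep⟩

/-- The head steps that survive when the term is applied to an argument. -/
def NonLamHead (a b : LamH) : Prop := Head a b ∧ ∀ w, a ≠ lam w

theorem NonLamHead.beta (u v : LamH) : NonLamHead (app (lam u) v) (subst u 0 v) :=
  ⟨Head.beta u v, fun _ h => by cases h⟩

theorem NonLamHead.app_left {a b : LamH} (h : NonLamHead a b) (c : LamH) :
    NonLamHead (app a c) (app b c) :=
  ⟨Head.appL c h.1 h.2, fun _ h => by cases h⟩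

theorem reflTransGen_nonLamHead_app_left {a b : LamH} (h : ReflTransGen NonLamHead a b)
    (c : LamH) : ReflTransGen NonLamHead (app a c) (app b c) :=
  h.lift (app · c) fun _ _ h => h.app_left c

theorem transGen_nonLamHead_app_left {a b : LamH} (h : TransGen NonLamHead a b) (c : LamH) :
    TransGen NonLamHead (app a c) (app b c) :=
  h.lift (app · c) fun _ _ h => h.app_left c

theorem reflTransGen_head_of_nonLamHead {a b : LamH} (h : ReflTransGen NonLamHead a b) :
    ReflTransGen Head a b :=
  ReflTransGen.mono (fun _ _ h => h.1) _ _ h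

theorem transGen_head_of_nonLamHead {a b : LamH} (h : TransGen NonLamHead a b) :
    TransGen Head a b :=
  TransGen.mono (fun _ _ h => h.1) _ _ h

theorem transGen_head_cases {X Y : LamH} (h : TransGen Head X Y) :
    TransGen NonLamHead X Y ∨
      ∃ B B', ReflTransGen NonLamHead X (lam B) ∧ ReflTransGen Head B B' ∧ Y = lam B' := by
  induction h using TransGen.head_induction_on with
  | @single a hstep =>
    by_cases ha : ∀ w, a ≠ lam w
    · exact .inl (.single ⟨hstep, ha⟩)
    · obtain ⟨B, rfl⟩ : ∃ B, a = lam B := by simpa using ha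
      cases hstep with
      | abs hB => exact .inr ⟨B, _, .refl, .single hB, rfl⟩
  | @head a c hstep hrest ih =>
    by_cases ha : ∀ w, a ≠ lam w
    · rcases ih with ih | ⟨B, B', hpre, hB, rfl⟩
      · exact .inl (.head ⟨hstep, ha⟩ ih)
      · exact .inr ⟨B, B', .head ⟨hstep, ha⟩ hpre, hB, rfl⟩
    · obtain ⟨B, rfl⟩ : ∃ B, a = lam B := by simpa using ha
      obtain ⟨B', rfl, hB⟩ := reflTransGen_head_lam (ReflTransGen.head hstep hrest.to_reflTransGen)
      exact .inr ⟨B, B', .refl, hB, rfl⟩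

/-- `wrap N A = λz. N A`, with `A` mentioning the bound variable `z`; for `A = z` it is the
η-expansion of `N`. -/
def wrap (N A : LamH) : LamH := lam (app (lift N 0) A)

theorem NonLamHead.wrap_app (N A s : LamH) :
    NonLamHead (app (wrap N A) s) (app N (subst A 0 s)) := by
  have h := NonLamHead.beta (app (lift N 0) A) s
  rwa [subst, subst_lift_same] at h

theorem head_wrap_lam (B A : LamH) : Head (wrap (lam B) A) (lam (replace B 0 A)) :=
  Head.abs (Head.beta _ _)

theorem head_wrap {X Y : LamH} (h : NonLamHead X Y) (A : LamH) : Head (wrap X A) (wrap Y A) := by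
  obtain ⟨x, y, rfl⟩ := h.1.eq_app_of_ne_lam h.2
  exact Head.abs (Head.appL A (head_lift h.1 0) fun _ h => by cases h)

/-- `J = Θ G → (λy. y (Θ y)) G → G J → λy z. y (J z)`. -/
theorem transGen_nonLamHead_Jterm :
    TransGen NonLamHead Jterm (lam (lam (app (var 1) (app Jterm (var 0))))) := by
  have hΘ : Head thetaTerm (lam (app (var 0) (app thetaTerm (var 0)))) := Head.beta _ _
  have hGJ : Head (app Gterm Jterm) (lam (lam (app (var 1) (app Jterm (var 0))))) :=
    Head.beta _ _
  exact .head ⟨Head.appL Gterm hΘ (fun _ h => by cases h), fun _ h => by cases h⟩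
    (.head (NonLamHead.beta _ Gterm) (.single ⟨hGJ, fun _ h => by cases h⟩))

theorem transGen_Jterm_app (X : LamH) :
    TransGen NonLamHead (app Jterm X) (wrap X (app Jterm (var 0))) := by
  have hX := NonLamHead.beta (lam (app (var 1) (app Jterm (var 0)))) X
  simp only [subst, subst_Jterm, lt_self_iff_false, if_true, if_false] at hX
  exact (transGen_nonLamHead_app_left transGen_nonLamHead_Jterm X).tail hX

theorem transGen_Jterm_app_app (X s : LamH) :
    TransGen NonLamHead (app (app Jterm X) s) (app X (app Jterm s)) := by
  have h := NonLamHead.wrap_app X (app Jterm (var 0)) s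
  simp only [subst, subst_Jterm, if_true] at h
  exact (transGen_nonLamHead_app_left (transGen_Jterm_app X) s).tail h

abbrev JtStep (a b : LamH) : Prop := Jred a b ∨ Head a b

theorem jtStep_lam_inv {u w : LamH} (h : JtStep (lam u) w) : ∃ u', w = lam u' ∧ JtStep u u' := by
  rcases h with h | h
  · cases h with | abs h => exact ⟨_, rfl, .inl h⟩
  · cases h with | abs h => exact ⟨_, rfl, .inr h⟩

theorem jtStep_app_cases {u v w : LamH} (h : JtStep (app u v) w) :
    (∃ P, u = lam P ∧ w = subst P 0 v) ∨ (u = H ∧ w = v) ∨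
      (∃ U, u = app H U ∧ w = app U (app H v)) ∨
      (∃ u', JtStep u u' ∧ (∀ x, u ≠ lam x) ∧ w = app u' v) := by
  rcases h with h | h
  · cases h with
    | one => exact .inr (.inl ⟨rfl, rfl⟩)
    | two => exact .inr (.inr (.inl ⟨_, rfl, rfl⟩))
    | appL _ h hnl _ => exact .inr (.inr (.inr ⟨_, .inl h, hnl, rfl⟩))
  · cases h with
    | beta => exact .inl ⟨_, rfl, rfl⟩
    | appL _ h hnl => exact .inr (.inr (.inr ⟨_, .inr h, hnl, rfl⟩))

theorem head_unique {t a b : LamH} (h₁ : Head t a) (h₂ : Head t b) : a = b := by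
  induction h₁ generalizing b with
  | beta =>
    cases h₂ with
    | beta => rfl
    | appL _ _ hn => exact absurd rfl (hn _)
  | appL _ _ hn ih =>
    cases h₂ with
    | beta => exact absurd rfl (hn _)
    | appL _ h _ => rw [ih h]
  | abs _ ih => cases h₂ with | abs h => rw [ih h]

theorem jred_unique {t a b : LamH} (h₁ : Jred t a) (h₂ : Jred t b) : a = b := by
  induction h₁ generalizing b with
  | one =>
    cases h₂ with
    | one => rfl
    | appL _ h => cases h
  | two =>
    cases h₂ with
    | two => rfl
    | appL _ _ _ hH => exact absurd rfl (hH _)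
  | appL _ h _ hH ih =>
    cases h₂ with
    | one => cases h
    | two => exact absurd rfl (hH _)
    | appL _ h' _ _ => rw [ih h']
  | abs _ ih => cases h₂ with | abs h => rw [ih h]

theorem jred_not_head {t a b : LamH} (h₁ : Jred t a) (h₂ : Head t b) : False := by
  induction h₁ generalizing b with
  | one => cases h₂ with | appL _ h => cases h
  | two => cases h₂ with | appL _ h => cases h with | appL _ h => cases h
  | appL _ _ hn _ ih =>
    cases h₂ with
    | beta => exact absurd rfl (hn _)
    | appL _ h _ => exact ih h
  | abs _ ih => cases h₂ with | abs h => exact ih h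

theorem jtStep_unique {t a b : LamH} (h₁ : JtStep t a) (h₂ : JtStep t b) : a = b := by
  rcases h₁ with h₁ | h₁ <;> rcases h₂ with h₂ | h₂
  · exact jred_unique h₁ h₂
  · exact (jred_not_head h₁ h₂).elim
  · exact (jred_not_head h₂ h₁).elim
  · exact head_unique h₁ h₂

theorem not_jtStep_of_varApp {t a : LamH} (ht : VarApp t) (h : JtStep t a) : False := by
  induction ht generalizing a with
  | var => rcases h with h | h <;> cases h
  | app _ ht ih =>
    rcases h with h | h
    · cases h with
      | one => cases ht
      | two => cases ht with | app _ ht => cases ht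
      | appL _ h => exact ih (.inl h)
    · cases h with
      | beta => cases ht
      | appL _ h => exact ih (.inr h)

theorem not_jtStep_of_hnfH {t a : LamH} (ht : HnfH t) (h : JtStep t a) : False := by
  induction ht generalizing a with
  | H => rcases h with h | h <;> cases h
  | base hv => exact not_jtStep_of_varApp hv h
  | lam _ ih =>
    obtain ⟨_, -, h⟩ := jtStep_lam_inv h
    exact ih h

theorem not_head_of_hnf {t a : LamH} (ht : Hnf t) (h : Head t a) : False := by
  induction ht generalizing a with
  | base hv => exact not_jtStep_of_varApp hv (.inr h)
  | lam _ ih => cases h with | abs h => exact ih h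

theorem hnfH_or_jtStep (M : LamH) : HnfH M ∨ ∃ M', JtStep M M' := by
  induction M with
  | var n => exact .inl (HnfH.base (VarApp.var n))
  | H => exact .inl HnfH.H
  | lam u ih =>
    rcases ih with h | ⟨u', h | h⟩
    · exact .inl (HnfH.lam h)
    · exact .inr ⟨_, .inl (Jred.abs h)⟩
    · exact .inr ⟨_, .inr (Head.abs h)⟩
  | app u v ihu _ =>
    by_cases hl : ∃ P, u = lam P
    · obtain ⟨P, rfl⟩ := hl
      exact .inr ⟨_, .inr (Head.beta P v)⟩
    by_cases hH : u = H
    · subst hH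
      exact .inr ⟨v, .inl (Jred.one v)⟩
    by_cases hHa : ∃ w, u = app H w
    · obtain ⟨w, rfl⟩ := hHa
      exact .inr ⟨_, .inl (Jred.two w v)⟩
    push Not at hl hHa
    rcases ihu with hu | ⟨u', hu | hu⟩
    · cases hu with
      | H => exact absurd rfl hH
      | base hv => exact .inl (HnfH.base (VarApp.app v hv))
      | lam => exact absurd rfl (hl _)
    · exact .inr ⟨_, .inl (Jred.appL v hu hl hHa)⟩
    · exact .inr ⟨_, .inr (Head.appL v hu hl)⟩

/-- `Sim M N`: the λ-term `N` is obtained from `M[J/H]` by inserting, at arbitrary positions,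
the expansions `N ↦ J N` and `N ↦ λz. N A` (where `A` is itself such an expansion of `z`). Both
reduce to a term simulating `N` as soon as they are applied, see `reduce_app_of_sim`. -/
inductive Sim : LamH → LamH → Prop
  | var (n : ℕ) : Sim (var n) (var n)
  | H : Sim H Jterm
  | lam {M N : LamH} : Sim M N → Sim (lam M) (lam N)
  | app {M N P Q : LamH} : Sim M N → Sim P Q → Sim (app M P) (app N Q)
  | jterm {M N : LamH} : Sim M N → Sim M (app Jterm N)
  | wrap {M N A : LamH} : Sim M N → Sim (var 0) A → Sim M (wrap N A)

theorem sim_substH (M : LamH) : Sim M (substH M Jterm) := by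
  induction M with
  | var n => exact Sim.var n
  | H => exact Sim.H
  | lam u ih => exact Sim.lam ih
  | app u v ihu ihv => exact Sim.app ihu ihv

theorem sim_lift {M N : LamH} (h : Sim M N) (d : ℕ) : Sim (lift M d) (lift N d) := by
  induction h generalizing d with
  | var n => simp only [lift]; split_ifs <;> exact Sim.var _
  | H => rw [lift_Jterm]; exact Sim.H
  | lam _ ih => exact Sim.lam (ih (d + 1))
  | app _ _ ih₁ ih₂ => exact Sim.app (ih₁ d) (ih₂ d)
  | jterm _ ih => rw [lift, lift_Jterm]; exact Sim.jterm (ih d)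
  | @wrap M N A _ _ ihN ihA =>
    have hA := ihA (d + 1)
    simp only [lift, Nat.zero_lt_succ, if_true] at hA
    simp only [wrap, lift]
    rw [lift_lift N (Nat.zero_le d)]
    exact Sim.wrap (ihN d) hA

theorem sim_subst {M N P Q : LamH} (h : Sim M N) (hPQ : Sim P Q) (k : ℕ) :
    Sim (subst M k P) (subst N k Q) := by
  induction h generalizing P Q k with
  | var n => simp only [subst]; split_ifs <;> first | exact hPQ | exact Sim.var _
  | H => rw [subst_Jterm]; exact Sim.H
  | lam _ ih => exact Sim.lam (ih (sim_lift hPQ 0) (k + 1))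
  | app _ _ ih₁ ih₂ => exact Sim.app (ih₁ hPQ k) (ih₂ hPQ k)
  | jterm _ ih => rw [subst, subst_Jterm]; exact Sim.jterm (ih hPQ k)
  | @wrap M N A _ _ ihN ihA =>
    have hA := ihA (sim_lift hPQ 0) (k + 1)
    simp only [subst] at hA
    simp only [wrap, subst]
    rw [subst_lift N Q (Nat.zero_le k)]
    exact Sim.wrap (ihN hPQ k) hA

theorem sim_subst_of_sim_var {A M N : LamH} (hA : Sim (var 0) A) (h : Sim M N) :
    Sim M (subst A 0 N) := by
  simpa [subst] using sim_subst hA h 0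

theorem sim_replace {M N A : LamH} (h : Sim M N) {k : ℕ} (hA : Sim (var k) A) :
    Sim M (replace N k A) := by
  have h' : Sim (replace M k (var k)) (replace N k A) := sim_subst (sim_lift h (k + 1)) hA k
  rwa [replace_self_var] at h'

theorem sim_lam_inv {M B : LamH} (h : Sim M (lam B)) :
    (∃ Q, M = lam Q ∧ Sim Q B) ∨ ∃ Y A, lam B = wrap Y A ∧ Sim M Y ∧ Sim (var 0) A := by
  cases h with
  | lam h => exact .inl ⟨_, rfl, h⟩
  | wrap hY hA => exact .inr ⟨_, _, rfl, hY, hA⟩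

theorem sim_lam_replace {M B A : LamH} (h : Sim M (lam B)) (hA : Sim (var 0) A) :
    Sim M (lam (replace B 0 A)) := by
  rcases sim_lam_inv h with ⟨Q, rfl, hQ⟩ | ⟨Y, A', hB, hY, hA'⟩
  · exact Sim.lam (sim_replace hQ hA)
  · obtain rfl : B = app (lift Y 0) A' := by injection hB
    have hY' : replace (lift Y 0) 0 A = lift Y 0 := by
      rw [replace, lift_lift Y le_rfl, subst_lift_same]
    rw [show replace (app (lift Y 0) A') 0 A = app (replace (lift Y 0) 0 A) (replace A' 0 A)
      from rfl, hY']
    exact Sim.wrap hY (sim_replace hA' hA)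

/-- `M` and `N` are related by `Sim` through a rule other than `Sim.jterm` and `Sim.wrap`. -/
def RootSim : LamH → LamH → Prop
  | var n, N => N = var n
  | H, N => N = Jterm
  | lam P, N => ∃ Q, N = lam Q ∧ Sim P Q
  | app P P', N => ∃ Q Q', N = app Q Q' ∧ Sim P Q ∧ Sim P' Q'

theorem reduce_app_of_sim {M N M₂ N₂ : LamH} (h : Sim M N) (h₂ : Sim M₂ N₂) :
    ∃ N' N₂', ReflTransGen NonLamHead (app N N₂) (app N' N₂') ∧ RootSim M N' ∧ Sim M₂ N₂' := by
  induction h generalizing M₂ N₂ with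
  | var n => exact ⟨_, _, .refl, rfl, h₂⟩
  | H => exact ⟨_, _, .refl, rfl, h₂⟩
  | lam h _ => exact ⟨_, _, .refl, ⟨_, rfl, h⟩, h₂⟩
  | app h h' _ _ => exact ⟨_, _, .refl, ⟨_, _, rfl, h, h'⟩, h₂⟩
  | jterm _ ih =>
    obtain ⟨N', N₂', hred, hroot, hsim⟩ := ih (Sim.jterm h₂)
    exact ⟨N', N₂', (transGen_Jterm_app_app _ _).to_reflTransGen.trans hred, hroot, hsim⟩
  | wrap _ hA ih _ =>
    obtain ⟨N', N₂', hred, hroot, hsim⟩ := ih (sim_subst_of_sim_var hA h₂)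
    exact ⟨N', N₂', .head (NonLamHead.wrap_app _ _ _) hred, hroot, hsim⟩

theorem wrap_replay {X Y M A : LamH} (hXY : TransGen Head X Y) (hM : Sim M Y)
    (hA : Sim (var 0) A) : ∃ T, TransGen Head (wrap X A) T ∧ Sim M T := by
  rcases transGen_head_cases hXY with hXY | ⟨B, B', hpre, hB, rfl⟩
  · exact ⟨wrap Y A, hXY.lift (wrap · A) fun _ _ h => head_wrap h A, Sim.wrap hM hA⟩
  · have hpre' : ReflTransGen Head (wrap X A) (wrap (lam B) A) :=
      hpre.lift (wrap · A) fun _ _ h => head_wrap h A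
    have hpost : ReflTransGen Head (lam (replace B 0 A)) (lam (replace B' 0 A)) :=
      hB.lift (fun b => lam (replace b 0 A)) fun _ _ h => Head.abs (head_replace h 0 A)
    exact ⟨_, (TransGen.tail' hpre' (head_wrap_lam B A)).trans_left hpost,
      sim_lam_replace hM hA⟩

theorem app_replay {X Y Ml Mr N₂ : LamH} (hXY : TransGen Head X Y) (hMl : Sim Ml Y)
    (hMr : Sim Mr N₂) :
    ∃ Mf T, ReflTransGen NonLamHead (app Ml Mr) Mf ∧ TransGen Head (app X N₂) T ∧ Sim Mf T := by
  rcases transGen_head_cases hXY with hXY | ⟨B, B', hpre, hB, rfl⟩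
  · exact ⟨app Ml Mr, app Y N₂, .refl,
      transGen_head_of_nonLamHead (transGen_nonLamHead_app_left hXY N₂), Sim.app hMl hMr⟩
  · have hred : TransGen Head (app X N₂) (subst B' 0 N₂) :=
      (TransGen.tail' (reflTransGen_head_of_nonLamHead (reflTransGen_nonLamHead_app_left hpre N₂))
        (Head.beta B N₂)).trans_left (hB.lift (subst · 0 N₂) fun _ _ h => head_subst h 0 N₂)
    rcases sim_lam_inv hMl with ⟨Q, rfl, hQ⟩ | ⟨Y', A, hB', hY', hA⟩
    · exact ⟨subst Q 0 Mr, _, .single (NonLamHead.beta Q Mr), hred, sim_subst hQ hMr 0⟩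
    · obtain rfl : B' = app (lift Y' 0) A := by injection hB'
      refine ⟨app Ml Mr, _, .refl, hred, ?_⟩
      rw [subst, subst_lift_same]
      exact Sim.app hY' (sim_subst_of_sim_var hA hMr)

/-- Every `→J`/`→t` step of `M` is matched by at least one head step of a simulant, after
which `M` may have to catch up by further head steps. When `M` is not an abstraction these
steps stay in function position, so the simulation can be continued under an application. -/
theorem sim_step {M N M' : LamH} (h : Sim M N) (hs : JtStep M M') :
    ∃ Mf T, ReflTransGen Head M' Mf ∧ TransGen Head N T ∧ Sim Mf T ∧
      ((∀ w, M ≠ lam w) → ReflTransGen NonLamHead M' Mf) := by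
  induction h generalizing M' with
  | var n => rcases hs with h | h <;> cases h
  | H => rcases hs with h | h <;> cases h
  | lam _ ih =>
    obtain ⟨u', rfl, hu⟩ := jtStep_lam_inv hs
    obtain ⟨Mf, T, hM, hT, hS, -⟩ := ih hu
    exact ⟨lam Mf, lam T, hM.lift lam fun _ _ => Head.abs, hT.lift lam fun _ _ => Head.abs,
      Sim.lam hS, fun h => absurd rfl (h _)⟩
  | app h₁ h₂ ih₁ _ =>
    rcases jtStep_app_cases hs with ⟨P, rfl, rfl⟩ | ⟨rfl, rfl⟩ | ⟨U, rfl, rfl⟩ | ⟨u', hu, hnl, rfl⟩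
    · obtain ⟨_, N₂', hred, ⟨Q, rfl, hPQ⟩, hsim⟩ := reduce_app_of_sim h₁ h₂
      exact ⟨_, _, .refl, TransGen.tail' (reflTransGen_head_of_nonLamHead hred) (Head.beta Q N₂'),
        sim_subst hPQ hsim 0, fun _ => .refl⟩
    · obtain ⟨_, N₂', hred, rfl, hsim⟩ := reduce_app_of_sim h₁ h₂
      exact ⟨_, _, .refl,
        transGen_head_of_nonLamHead (TransGen.trans_right hred (transGen_Jterm_app N₂')),
        Sim.wrap hsim (Sim.jterm (Sim.var 0)), fun _ => .refl⟩
    · obtain ⟨_, N₂', hred, ⟨c, d, rfl, hc, hd⟩, hsim⟩ := reduce_app_of_sim h₁ h₂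
      obtain ⟨_, d', hred', rfl, hd'⟩ := reduce_app_of_sim hc hd
      refine ⟨_, _, .refl, ?_, Sim.app hd' (Sim.app Sim.H hsim), fun _ => .refl⟩
      exact transGen_head_of_nonLamHead (TransGen.trans_right
        (hred.trans (reflTransGen_nonLamHead_app_left hred' N₂')) (transGen_Jterm_app_app d' N₂'))
    · obtain ⟨Mf₁, T₁, -, hT₁, hS₁, hpath₁⟩ := ih₁ hu
      obtain ⟨Mf, T, hpath, hT, hS⟩ := app_replay hT₁ hS₁ h₂
      have hchain := (reflTransGen_nonLamHead_app_left (hpath₁ hnl) _).trans hpath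
      exact ⟨Mf, T, reflTransGen_head_of_nonLamHead hchain, hT, hS, fun _ => hchain⟩
  | jterm _ ih =>
    obtain ⟨Mf, T₀, hM, hT₀, hS, hpath⟩ := ih hs
    obtain ⟨T, hT, hS'⟩ := wrap_replay hT₀ hS (Sim.jterm (Sim.var 0))
    exact ⟨Mf, T, hM, (transGen_head_of_nonLamHead (transGen_Jterm_app _)).trans hT, hS', hpath⟩
  | wrap _ hA ih _ =>
    obtain ⟨Mf, T₀, hM, hT₀, hS, hpath⟩ := ih hs
    obtain ⟨T, hT, hS'⟩ := wrap_replay hT₀ hS hA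
    exact ⟨Mf, T, hM, hT, hS', hpath⟩

theorem solvable_of_reflTransGen {a b : LamH} (h : ReflTransGen Head a b) (hb : Solvable b) :
    Solvable a :=
  let ⟨z, hz, hzn⟩ := hb
  ⟨z, h.trans hz, hzn⟩

theorem solvable_lam_iff {B : LamH} : Solvable (lam B) ↔ Solvable B := by
  constructor
  · rintro ⟨z, hz, hzn⟩
    obtain ⟨B', rfl, hB⟩ := reflTransGen_head_lam hz
    cases hzn with
    | base hv => cases hv
    | lam hzn => exact ⟨B', hB, hzn⟩
  · rintro ⟨z, hz, hzn⟩
    exact ⟨lam z, hz.lift lam fun _ _ => Head.abs, Hnf.lam hzn⟩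

theorem solvable_Jterm : Solvable Jterm :=
  ⟨_, reflTransGen_head_of_nonLamHead transGen_nonLamHead_Jterm.to_reflTransGen,
    Hnf.lam (Hnf.lam (Hnf.base (VarApp.app _ (VarApp.var 1))))⟩

def apps : LamH → List LamH → LamH
  | t, [] => t
  | t, s :: sp => apps (app t s) sp

theorem varApp_apps {t : LamH} (ht : VarApp t) (sp : List LamH) : VarApp (apps t sp) := by
  induction sp generalizing t with
  | nil => exact ht
  | cons s sp ih => exact ih (VarApp.app s ht)

theorem varApp_lift {t : LamH} (ht : VarApp t) (d : ℕ) : VarApp (lift t d) := by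
  induction ht with
  | var n => simp only [lift]; split_ifs <;> exact VarApp.var _
  | app v _ ih => exact VarApp.app _ ih

theorem reflTransGen_head_apps {a b : LamH} (h : ReflTransGen NonLamHead a b) (sp : List LamH) :
    ReflTransGen Head (apps a sp) (apps b sp) := by
  induction sp generalizing a b with
  | nil => exact reflTransGen_head_of_nonLamHead h
  | cons s sp ih => exact ih (reflTransGen_nonLamHead_app_left h s)

def size : LamH → ℕ
  | var _ => 0
  | H => 0
  | lam t => size t + 1
  | app t s => size t + size s + 1

theorem size_lift (t : LamH) (d : ℕ) : size (lift t d) = size t := by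
  induction t generalizing d with
  | var n => simp only [lift]; split_ifs <;> rfl
  | H => rfl
  | lam u ih => simp [lift, size, ih]
  | app u v ihu ihv => simp [lift, size, ihu, ihv]

/-- The induction is on `size N`, not on `Sim`: unfolding an expansion of `N` lifts `N`. -/
theorem solvable_apps_of_sim_varApp {M N : LamH} (h : Sim M N) (hM : VarApp M)
    (sp : List LamH) : Solvable (apps N sp) := by
  obtain ⟨n, hn⟩ : ∃ n, size N < n := ⟨_, Nat.lt_succ_self _⟩
  induction n generalizing M N sp with
  | zero => exact absurd hn (Nat.not_lt_zero _)
  | succ n ih =>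
    cases h with
    | var m => exact ⟨_, .refl, Hnf.base (varApp_apps (VarApp.var m) sp)⟩
    | H => cases hM
    | lam => cases hM
    | app h₁ _ =>
      cases hM with
      | app _ hM => exact ih h₁ hM (_ :: sp) (by simp only [size] at hn; omega)
    | @jterm _ N₀ h₀ =>
      cases sp with
      | nil =>
        refine solvable_of_reflTransGen
          (reflTransGen_head_of_nonLamHead (transGen_Jterm_app N₀).to_reflTransGen) ?_
        refine solvable_lam_iff.mpr (ih (sim_lift h₀ 0) (varApp_lift hM 0) [_] ?_)
        simp only [size, size_lift] at hn ⊢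
        omega
      | cons s sp =>
        exact solvable_of_reflTransGen
          (reflTransGen_head_apps (transGen_Jterm_app_app N₀ s).to_reflTransGen sp)
          (ih h₀ hM (_ :: sp) (by simp only [size] at hn; omega))
    | @wrap _ N₀ A h₀ _ =>
      cases sp with
      | nil =>
        refine solvable_lam_iff.mpr (ih (sim_lift h₀ 0) (varApp_lift hM 0) [A] ?_)
        simp only [wrap, size, size_lift] at hn ⊢
        omega
      | cons s sp =>
        exact solvable_of_reflTransGen
          (reflTransGen_head_apps (.single (NonLamHead.wrap_app N₀ A s)) sp)
          (ih h₀ hM (_ :: sp) (by simp only [wrap, size, size_lift] at hn; omega))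

theorem solvable_apps_replace_of_varApp {X : LamH} (hX : VarApp X) {k : ℕ} {A : LamH}
    (hA : Sim (var k) A) (sp : List LamH) : Solvable (apps (replace X k A) sp) := by
  induction hX generalizing sp with
  | var n =>
    by_cases hn : n = k
    · subst hn
      rw [replace_var_same]
      exact solvable_apps_of_sim_varApp hA (VarApp.var n) sp
    · rw [replace_var_of_ne hn A]
      exact ⟨_, .refl, Hnf.base (varApp_apps (VarApp.var n) sp)⟩
  | app v _ ih => exact ih (replace v k A :: sp)

theorem solvable_replace {X : LamH} (hX : Solvable X) {k : ℕ} {A : LamH} (hA : Sim (var k) A) :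
    Solvable (replace X k A) := by
  obtain ⟨z, hz, hzn⟩ := hX
  refine solvable_of_reflTransGen (hz.lift (replace · k A) fun _ _ h => head_replace h k A) ?_
  clear hz
  induction hzn generalizing k A with
  | base hv => exact solvable_apps_replace_of_varApp hv hA []
  | lam _ ih =>
    show Solvable (replace (lam _) k A)
    rw [replace_lam]
    refine solvable_lam_iff.mpr (ih ?_)
    simpa [lift] using sim_lift hA 0

theorem solvable_wrap_lam {B A : LamH} (hB : Solvable B) (hA : Sim (var 0) A) :
    Solvable (wrap (lam B) A) :=
  solvable_of_reflTransGen (.single (head_wrap_lam B A))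
    (solvable_lam_iff.mpr (solvable_replace hB hA))

theorem solvable_wrap {B A : LamH} (hB : Solvable B) (hA : Sim (var 0) A) :
    Solvable (wrap B A) := by
  obtain ⟨z, hz, hzn⟩ := hB
  induction hz using ReflTransGen.head_induction_on with
  | refl =>
    cases hzn with
    | base hv => exact ⟨_, .refl, Hnf.lam (Hnf.base (VarApp.app A (varApp_lift hv 0)))⟩
    | lam hzn => exact solvable_wrap_lam ⟨_, .refl, hzn⟩ hA
  | @head B B' hstep hrest ih =>
    by_cases hB : ∀ w, B ≠ lam w
    · exact solvable_of_reflTransGen (.single (head_wrap ⟨hstep, hB⟩ A)) ih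
    · obtain ⟨B₀, rfl⟩ : ∃ B₀, B = lam B₀ := by simpa using hB
      exact solvable_wrap_lam (solvable_lam_iff.mp ⟨z, .head hstep hrest, hzn⟩) hA

theorem solvable_of_sim_hnfH {M N : LamH} (h : Sim M N) (hM : HnfH M) : Solvable N := by
  induction h with
  | var n => exact ⟨_, .refl, Hnf.base (VarApp.var n)⟩
  | H => exact solvable_Jterm
  | lam _ ih =>
    cases hM with
    | base hv => cases hv
    | lam hM => exact solvable_lam_iff.mpr (ih hM)
  | app h₁ h₂ =>
    cases hM with
    | base hv => exact solvable_apps_of_sim_varApp (Sim.app h₁ h₂) hv []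
  | jterm _ ih =>
    exact solvable_of_reflTransGen
      (reflTransGen_head_of_nonLamHead (transGen_Jterm_app _).to_reflTransGen)
      (solvable_wrap (ih hM) (Sim.jterm (Sim.var 0)))
  | wrap _ hA ih => exact solvable_wrap (ih hM) hA

theorem solvable_of_sim {M N : LamH} (hM : Acc (fun x y => TransGen JtStep y x) M)
    (h : Sim M N) : Solvable N := by
  induction hM generalizing N with
  | intro M _ ih =>
    rcases hnfH_or_jtStep M with hM | ⟨M₁, hs⟩
    · exact solvable_of_sim_hnfH h hM
    · obtain ⟨Mf, T, hMf, hT, hS, -⟩ := sim_step h hs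
      exact solvable_of_reflTransGen hT.to_reflTransGen
        (ih Mf (TransGen.head' hs (ReflTransGen.mono (fun _ _ => Or.inr) _ _ hMf)) hS)

theorem jtSolvable_of_sim {M N : LamH} (hN : Acc (fun x y => TransGen Head y x) N)
    (h : Sim M N) : JtSolvable M := by
  induction hN generalizing M with
  | intro N _ ih =>
    rcases hnfH_or_jtStep M with hM | ⟨M₁, hs⟩
    · exact ⟨M, .refl, hM⟩
    · obtain ⟨Mf, T, hMf, hT, hS, -⟩ := sim_step h hs
      obtain ⟨z, hz, hzn⟩ := ih T hT hS
      exact ⟨z, .head hs ((ReflTransGen.mono (fun _ _ => Or.inr) _ _ hMf).trans hz), hzn⟩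

/-- `U` is J-t-solvable iff `U[J/H]` is solvable. -/
theorem JtSolvable_iff_substH_J_solvable (U : LamH) :
    JtSolvable U ↔ Solvable (substH U Jterm) := by
  constructor
  · rintro ⟨z, hz, hzn⟩
    exact solvable_of_sim (acc_transGen_of_normalizes (r := JtStep) jtStep_unique hz
      fun _ => not_jtStep_of_hnfH hzn) (sim_substH U)
  · rintro ⟨z, hz, hzn⟩
    exact jtSolvable_of_sim (acc_transGen_of_normalizes (r := Head) head_unique hz
      fun _ => not_head_of_hnf hzn) (sim_substH U)

end LamH
end
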